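/- Every derivation in the labeled calculus G3Kt whose end sequent is a labeled polytree sequent consists solely of labeled polytree sequents, i.e., every labeled sequent occurring in the derivation is a labeled polytree sequent. -/

import Mathlib

set_option autoImplicit false

/-! # Common definitions: tense logics, nested/labeled/display calculi
    (following Ciabattoni, Lyon, Ramanayake, Tiu,
     "Display to Labeled Proofs and Back Again for Tense Logics") -/

/-- Diamonds: `wd` = ◇ (white diamond), `bd` = ◆ (black diamond). -/
inductive Dmd : Type
  | wd
  | bd
deriving DecidableEq, Repr

/-- Tense formulae in negation normal form:
    `A ::= p | p̄ | A ∧ A | A ∨ A | □A | ◇A | ■A | ◆A`. -/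
inductive Formula : Type
  | pos : Nat → Formula      -- propositional variable p
  | neg : Nat → Formula      -- negated propositional variable p̄
  | and : Formula → Formula → Formula
  | or : Formula → Formula → Formula
  | box : Formula → Formula   -- □
  | dia : Formula → Formula   -- ◇
  | bbox : Formula → Formula  -- ■
  | bdia : Formula → Formula  -- ◆
deriving DecidableEq, Repr

/-- The De Morgan dual `Ā` of a formula `A`. -/
def Formula.dual : Formula → Formula
  | .pos p => .neg p
  | .neg p => .pos p
  | .and A B => .or A.dual B.dual
  | .or A B => .and A.dual B.dual
  | .box A => .dia A.dual
  | .dia A => .box A.dual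
  | .bbox A => .bdia A.dual
  | .bdia A => .bbox A.dual

/-- `A → B` is defined as `Ā ∨ B`. -/
def Formula.imp (A B : Formula) : Formula := A.dual.or B

/-- `A ↔ B` is defined as `(A → B) ∧ (B → A)`. -/
def Formula.iffF (A B : Formula) : Formula := (A.imp B).and (B.imp A)

/-- `⟨?⟩A` for a diamond `⟨?⟩ ∈ {◇, ◆}`. -/
def dmdF : Dmd → Formula → Formula
  | .wd, A => .dia A
  | .bd, A => .bdia A

/-- `⟨?⟩₁…⟨?⟩ₘ A` for a string of diamonds. -/
def applyDmds : List Dmd → Formula → Formula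
  | [], A => A
  | d :: ds, A => dmdF d (applyDmds ds A)

/-- A general path axiom `ΠA → ΣA`, given by the strings `Π` (ant) and `Σ` (suc). -/
structure GenPath : Type where
  ant : List Dmd
  suc : List Dmd

/-- A path axiom `ΠA → ⟨?⟩A`. -/
structure PathAx : Type where
  ant : List Dmd
  suc : Dmd
deriving DecidableEq

/-- Every path axiom is a general path axiom. -/
def pathToGen (F : PathAx) : GenPath := ⟨F.ant, [F.suc]⟩

/-- All instances `ΠA → ΣA` of the general path axioms in `GP`. -/
def gpInstances (GP : Set GenPath) : Set Formula :=
  {F | ∃ gp ∈ GP, ∃ A : Formula, F = (applyDmds gp.ant A).imp (applyDmds gp.suc A)}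

/-- The Hilbert system `Kt + S`: classical propositional axioms, modus ponens,
    the tense axioms, and necessitation for □ and ■, plus the axioms in `S`. -/
inductive KtProof (S : Set Formula) : Formula → Prop
  | ax {A : Formula} : A ∈ S → KtProof S A
  | pl1 (A B : Formula) : KtProof S (A.imp (B.imp A))
  | pl2 (A B : Formula) : KtProof S ((B.dual.imp A.dual).imp (A.imp B))
  | pl3 (A B C : Formula) :
      KtProof S ((A.imp (B.imp C)).imp ((A.imp B).imp (A.imp C)))
  | tense1 (A : Formula) : KtProof S (A.imp (Formula.box (Formula.bdia A)))
  | tense2 (A : Formula) : KtProof S (A.imp (Formula.bbox (Formula.dia A)))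
  | kbox (A B : Formula) :
      KtProof S ((Formula.box (A.imp B)).imp ((Formula.box A).imp (Formula.box B)))
  | kbbox (A B : Formula) :
      KtProof S ((Formula.bbox (A.imp B)).imp ((Formula.bbox A).imp (Formula.bbox B)))
  | boxdual (A : Formula) :
      KtProof S ((Formula.box A).iffF (Formula.dia A.dual).dual)
  | bboxdual (A : Formula) :
      KtProof S ((Formula.bbox A).iffF (Formula.bdia A.dual).dual)
  | mp {A B : Formula} : KtProof S (A.imp B) → KtProof S A → KtProof S B
  | necbox {A : Formula} : KtProof S A → KtProof S (Formula.box A)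
  | necbbox {A : Formula} : KtProof S A → KtProof S (Formula.bbox A)

/-! ## Nested sequents -/

/-- Nested sequents: `X ::= ε | A | X, X | ∘{X} | •{X}`. -/
inductive NSeq : Type
  | empty
  | fml : Formula → NSeq
  | comma : NSeq → NSeq → NSeq
  | white : NSeq → NSeq   -- ∘{X}
  | black : NSeq → NSeq   -- •{X}
deriving DecidableEq, Repr

/-- Comma is associative and commutative with unit ε: the induced congruence. -/
inductive NEquiv : NSeq → NSeq → Prop
  | refl (X : NSeq) : NEquiv X X
  | symm {X Y : NSeq} : NEquiv X Y → NEquiv Y X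
  | trans {X Y Z : NSeq} : NEquiv X Y → NEquiv Y Z → NEquiv X Z
  | comm (X Y : NSeq) : NEquiv (X.comma Y) (Y.comma X)
  | assoc (X Y Z : NSeq) : NEquiv ((X.comma Y).comma Z) (X.comma (Y.comma Z))
  | unit (X : NSeq) : NEquiv (X.comma NSeq.empty) X
  | commaCongr {X X' Y Y' : NSeq} :
      NEquiv X X' → NEquiv Y Y' → NEquiv (X.comma Y) (X'.comma Y')
  | whiteCongr {X Y : NSeq} : NEquiv X Y → NEquiv X.white Y.white
  | blackCongr {X Y : NSeq} : NEquiv X Y → NEquiv X.black Y.black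

/-- `★₁{… ★ₙ{Y} …}` where `★ⱼ = ∘` if `⟨?⟩ⱼ = ◇` and `★ⱼ = •` if `⟨?⟩ⱼ = ◆`. -/
def nestDmds : List Dmd → NSeq → NSeq
  | [], Y => Y
  | .wd :: ds, Y => (nestDmds ds Y).white
  | .bd :: ds, Y => (nestDmds ds Y).black

/-- The structural rules `NestSt(GP)` (premise, conclusion): for each
    `ΠA → ΣA ∈ GP`, from `X, ★Σ{Y}` infer `X, ★Π{Y}`. -/
def NestSt (GP : Set GenPath) : NSeq → NSeq → Prop :=
  fun prem concl => ∃ gp ∈ GP, ∃ X Y : NSeq,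
    prem = X.comma (nestDmds gp.suc Y) ∧ concl = X.comma (nestDmds gp.ant Y)

/-- The empty set of extension rules on nested sequents. -/
def NoNest : NSeq → NSeq → Prop := fun _ _ => False

/-- The shallow nested (display) calculus `SKT` extended with the
    structural rules `Ext` (relating premise to conclusion); nested sequents are
    treated up to the congruence `NEquiv` (comma is AC with unit ε). -/
inductive SKT (Ext : NSeq → NSeq → Prop) : NSeq → Prop
  | id (X : NSeq) (p : Nat) :
      SKT Ext ((X.comma (.fml (.pos p))).comma (.fml (.neg p)))
  | orR {X : NSeq} {A B : Formula} :
      SKT Ext (X.comma ((NSeq.fml A).comma (.fml B))) →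
      SKT Ext (X.comma (.fml (.or A B)))
  | andR {X : NSeq} {A B : Formula} :
      SKT Ext (X.comma (.fml A)) → SKT Ext (X.comma (.fml B)) →
      SKT Ext (X.comma (.fml (.and A B)))
  | ctr {X Y : NSeq} : SKT Ext (X.comma (Y.comma Y)) → SKT Ext (X.comma Y)
  | wk {X Y : NSeq} : SKT Ext X → SKT Ext (X.comma Y)
  | rf {X Y : NSeq} : SKT Ext (X.comma Y.white) → SKT Ext (X.black.comma Y)
  | rp {X Y : NSeq} : SKT Ext (X.comma Y.black) → SKT Ext (X.white.comma Y)
  | bbox {X : NSeq} {A : Formula} :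
      SKT Ext (X.comma (NSeq.fml A).black) → SKT Ext (X.comma (.fml (.bbox A)))
  | box {X : NSeq} {A : Formula} :
      SKT Ext (X.comma (NSeq.fml A).white) → SKT Ext (X.comma (.fml (.box A)))
  | bdia {X Y : NSeq} {A : Formula} :
      SKT Ext ((X.comma (Y.comma (.fml A)).black).comma (.fml (.bdia A))) →
      SKT Ext ((X.comma Y.black).comma (.fml (.bdia A)))
  | dia {X Y : NSeq} {A : Formula} :
      SKT Ext ((X.comma (Y.comma (.fml A)).white).comma (.fml (.dia A))) →
      SKT Ext ((X.comma Y.white).comma (.fml (.dia A)))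
  | ext {X Y : NSeq} : Ext X Y → SKT Ext X → SKT Ext Y
  | equiv {X Y : NSeq} : SKT Ext X → NEquiv X Y → SKT Ext Y

/-! ## Deep nested calculus -/

/-- One-hole contexts over nested sequents (up to `NEquiv` this suffices). -/
inductive Ctx : Type
  | hole
  | commaL : Ctx → NSeq → Ctx
  | white : Ctx → Ctx
  | black : Ctx → Ctx

/-- Filling the hole of a context with a nested sequent. -/
def Ctx.fill : Ctx → NSeq → NSeq
  | .hole, X => X
  | .commaL C Y, X => (C.fill X).comma Y
  | .white C, X => (C.fill X).white
  | .black C, X => (C.fill X).black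

/-- The deep nested calculus `DKT` extended with rules `Ext`
    (premise, conclusion); sequents are treated up to `NEquiv`. -/
inductive DKT (Ext : NSeq → NSeq → Prop) : NSeq → Prop
  | id (C : Ctx) (p : Nat) :
      DKT Ext (C.fill ((NSeq.fml (.pos p)).comma (.fml (.neg p))))
  | andD {C : Ctx} {Y : NSeq} {A B : Formula} :
      DKT Ext (C.fill ((NSeq.fml A).comma Y)) →
      DKT Ext (C.fill ((NSeq.fml B).comma Y)) →
      DKT Ext (C.fill ((NSeq.fml (.and A B)).comma Y))
  | orD {C : Ctx} {Y : NSeq} {A B : Formula} :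
      DKT Ext (C.fill ((NSeq.fml A).comma ((NSeq.fml B).comma Y))) →
      DKT Ext (C.fill ((NSeq.fml (.or A B)).comma Y))
  | bboxD {C : Ctx} {A : Formula} :
      DKT Ext (C.fill ((NSeq.fml (.bbox A)).comma (NSeq.fml A).black)) →
      DKT Ext (C.fill (.fml (.bbox A)))
  | boxD {C : Ctx} {A : Formula} :
      DKT Ext (C.fill ((NSeq.fml (.box A)).comma (NSeq.fml A).white)) →
      DKT Ext (C.fill (.fml (.box A)))
  | bdia1 {C : Ctx} {Y : NSeq} {A : Formula} :
      DKT Ext (C.fill ((Y.comma (.fml A)).black.comma (.fml (.bdia A)))) →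
      DKT Ext (C.fill (Y.black.comma (.fml (.bdia A))))
  | bdia2 {C : Ctx} {Y : NSeq} {A : Formula} :
      DKT Ext (C.fill ((Y.comma (.fml (.bdia A))).white.comma (.fml A))) →
      DKT Ext (C.fill ((Y.comma (.fml (.bdia A))).white))
  | dia1 {C : Ctx} {Y : NSeq} {A : Formula} :
      DKT Ext (C.fill ((Y.comma (.fml A)).white.comma (.fml (.dia A)))) →
      DKT Ext (C.fill (Y.white.comma (.fml (.dia A))))
  | dia2 {C : Ctx} {Y : NSeq} {A : Formula} :
      DKT Ext (C.fill ((Y.comma (.fml (.dia A))).black.comma (.fml A))) →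
      DKT Ext (C.fill ((Y.comma (.fml (.dia A))).black))
  | ext {X Y : NSeq} : Ext X Y → DKT Ext X → DKT Ext Y
  | equiv {X Y : NSeq} : DKT Ext X → NEquiv X Y → DKT Ext Y

/-! ## Display rules and display equivalence -/

/-- `DisplayDeriv X Z`: `Z` is derivable from `X` using only the display rules
    (rf) and (rp) (and rearrangement by the comma-congruence `NEquiv`). -/
inductive DisplayDeriv : NSeq → NSeq → Prop
  | refl (X : NSeq) : DisplayDeriv X X
  | equiv {X Y Z : NSeq} : NEquiv X Y → DisplayDeriv Y Z → DisplayDeriv X Z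
  | rf {X Y Z : NSeq} :
      DisplayDeriv (X.black.comma Y) Z → DisplayDeriv (X.comma Y.white) Z
  | rp {X Y Z : NSeq} :
      DisplayDeriv (X.white.comma Y) Z → DisplayDeriv (X.comma Y.black) Z

/-- Two nested sequents are display equivalent when each is derivable from the
    other using only the display rules. -/
def DisplayEquiv (X Y : NSeq) : Prop := DisplayDeriv X Y ∧ DisplayDeriv Y X

/-! ## Labeled sequents and the labeled calculus G3Kt -/

abbrev Label : Type := Nat

/-- A set of relational atoms `Rxy`. -/
abbrev RelSet : Type := Finset (Label × Label)

/-- A labeled sequent `R, Γ`. -/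
abbrev LSeq : Type := RelSet × Multiset (Label × Formula)

/-- The label `z` occurs in the labeled sequent `S`. -/
def occursLS (z : Label) (S : LSeq) : Prop :=
  (∃ w, (z, w) ∈ S.1 ∨ (w, z) ∈ S.1) ∨ ∃ A, (z, A) ∈ S.2

/-- `R_◇ x y := Rxy` and `R_◆ x y := Ryx`. -/
def relAtom : Dmd → Label → Label → Label × Label
  | .wd, x, y => (x, y)
  | .bd, x, y => (y, x)

/-- Relational atoms of a `Π`-chain through the list of labels `ls`. -/
def chainAtoms : List Dmd → List Label → List (Label × Label)
  | d :: ds, a :: b :: rest => relAtom d a b :: chainAtoms ds (b :: rest)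
  | _, _ => []

/-- `ls` is a chain of labels for the diamond string `ds` from `x` to `y`
    (an empty string forces `x = y`). -/
def IsChainList (ds : List Dmd) (x y : Label) (ls : List Label) : Prop :=
  ls.length = ds.length + 1 ∧ ls.head? = some x ∧ ls.getLast? = some y

/-- The structural rules `LabSt(GP)` (premise, conclusion): for `ΠA → ΣA ∈ GP`,
    from `R, R_Π x y, R_Σ x y, Γ` infer `R, R_Π x y, Γ`, where all labels in
    `R_Σ x y` other than `x, y` are eigenvariables. -/
def LabSt (GP : Set GenPath) : LSeq → LSeq → Prop :=
  fun prem concl => ∃ gp ∈ GP,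
    ∃ (R : RelSet) (Γ : Multiset (Label × Formula)) (x y : Label)
      (als sls : List Label),
      IsChainList gp.ant x y als ∧ IsChainList gp.suc x y sls ∧
      concl = (R ∪ (chainAtoms gp.ant als).toFinset, Γ) ∧
      prem = (R ∪ (chainAtoms gp.ant als).toFinset ∪
                (chainAtoms gp.suc sls).toFinset, Γ) ∧
      (∀ z ∈ sls, z ≠ x → z ≠ y → ¬ occursLS z concl)

/-- The empty set of extension rules on labeled sequents. -/
def NoExt : LSeq → LSeq → Prop := fun _ _ => False

/-- Derivations in the labeled calculus `G3Kt` extended with rules `Ext`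
    (relating premise to conclusion). -/
inductive G3KtD (Ext : LSeq → LSeq → Prop) :
    RelSet → Multiset (Label × Formula) → Type
  | id (R : RelSet) (Γ : Multiset (Label × Formula)) (x : Label) (p : Nat) :
      G3KtD Ext R ((x, .pos p) ::ₘ (x, .neg p) ::ₘ Γ)
  | orR (R : RelSet) (Γ : Multiset (Label × Formula)) (x : Label) (A B : Formula)
      (D : G3KtD Ext R ((x, A) ::ₘ (x, B) ::ₘ Γ)) :
      G3KtD Ext R ((x, .or A B) ::ₘ Γ)
  | andR (R : RelSet) (Γ : Multiset (Label × Formula)) (x : Label) (A B : Formula)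
      (D1 : G3KtD Ext R ((x, A) ::ₘ Γ)) (D2 : G3KtD Ext R ((x, B) ::ₘ Γ)) :
      G3KtD Ext R ((x, .and A B) ::ₘ Γ)
  | boxR (R : RelSet) (Γ : Multiset (Label × Formula)) (x y : Label) (A : Formula)
      (hy : ¬ occursLS y (R, (x, Formula.box A) ::ₘ Γ))
      (D : G3KtD Ext (insert (x, y) R) ((y, A) ::ₘ Γ)) :
      G3KtD Ext R ((x, .box A) ::ₘ Γ)
  | diaR (R : RelSet) (Γ : Multiset (Label × Formula)) (x y : Label) (A : Formula)
      (h : (x, y) ∈ R)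
      (D : G3KtD Ext R ((y, A) ::ₘ (x, Formula.dia A) ::ₘ Γ)) :
      G3KtD Ext R ((x, .dia A) ::ₘ Γ)
  | bboxR (R : RelSet) (Γ : Multiset (Label × Formula)) (x y : Label) (A : Formula)
      (hy : ¬ occursLS y (R, (x, Formula.bbox A) ::ₘ Γ))
      (D : G3KtD Ext (insert (y, x) R) ((y, A) ::ₘ Γ)) :
      G3KtD Ext R ((x, .bbox A) ::ₘ Γ)
  | bdiaR (R : RelSet) (Γ : Multiset (Label × Formula)) (x y : Label) (A : Formula)
      (h : (y, x) ∈ R)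
      (D : G3KtD Ext R ((y, A) ::ₘ (x, Formula.bdia A) ::ₘ Γ)) :
      G3KtD Ext R ((x, .bdia A) ::ₘ Γ)
  | ext (R' : RelSet) (Γ' : Multiset (Label × Formula))
      (R : RelSet) (Γ : Multiset (Label × Formula))
      (h : Ext (R', Γ') (R, Γ)) (D : G3KtD Ext R' Γ') : G3KtD Ext R Γ

/-- Derivability in `G3Kt + Ext`. -/
def G3KtDeriv (Ext : LSeq → LSeq → Prop) (R : RelSet)
    (Γ : Multiset (Label × Formula)) : Prop :=
  Nonempty (G3KtD Ext R Γ)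

/-- `Q` holds of every labeled sequent occurring in the derivation `D`
    (including the end sequent). -/
def G3KtD.allSeq {Ext : LSeq → LSeq → Prop} (Q : LSeq → Prop) :
    ∀ {R : RelSet} {Γ : Multiset (Label × Formula)}, G3KtD Ext R Γ → Prop
  | _, _, .id R Γ x p => Q (R, (x, .pos p) ::ₘ (x, .neg p) ::ₘ Γ)
  | _, _, .orR R Γ x A B D => Q (R, (x, .or A B) ::ₘ Γ) ∧ D.allSeq Q
  | _, _, .andR R Γ x A B D1 D2 =>
      Q (R, (x, .and A B) ::ₘ Γ) ∧ D1.allSeq Q ∧ D2.allSeq Q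
  | _, _, .boxR R Γ x _ A _ D => Q (R, (x, .box A) ::ₘ Γ) ∧ D.allSeq Q
  | _, _, .diaR R Γ x _ A _ D => Q (R, (x, .dia A) ::ₘ Γ) ∧ D.allSeq Q
  | _, _, .bboxR R Γ x _ A _ D => Q (R, (x, .bbox A) ::ₘ Γ) ∧ D.allSeq Q
  | _, _, .bdiaR R Γ x _ A _ D => Q (R, (x, .bdia A) ::ₘ Γ) ∧ D.allSeq Q
  | _, _, .ext _ _ R Γ _ D => Q (R, Γ) ∧ D.allSeq Q

/-! ## Paths, inverses, compositions, completion, propagation rules -/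

/-- The inverse of a diamond: `◇⁻¹ = ◆` and `◆⁻¹ = ◇`. -/
def Dmd.inv : Dmd → Dmd
  | .wd => .bd
  | .bd => .wd

/-- The inverse `I(F)` of a path axiom `F`. -/
def PathAx.inv (F : PathAx) : PathAx := ⟨(F.ant.map Dmd.inv).reverse, F.suc.inv⟩

/-- `I(P)`, the set of inverses of the path axioms in `P`. -/
def invSet (P : Set PathAx) : Set PathAx := {F | ∃ G ∈ P, F = G.inv}

/-- The completion `P*`: the smallest set of path axioms containing `P`,
    containing `◇A → ◇A` and `◆A → ◆A`, and closed under compositions. -/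
inductive Completion (P : Set PathAx) : PathAx → Prop
  | base {F : PathAx} : F ∈ P → Completion P F
  | wrefl : Completion P ⟨[Dmd.wd], Dmd.wd⟩
  | brefl : Completion P ⟨[Dmd.bd], Dmd.bd⟩
  | comp {F G : PathAx} (i : Nat) (hi : i < G.ant.length) :
      Completion P F → Completion P G → G.ant.get ⟨i, hi⟩ = F.suc →
      Completion P ⟨G.ant.take i ++ F.ant ++ G.ant.drop (i + 1), G.suc⟩

/-- `(P ∪ I(P))*`. -/
def PStar (P : Set PathAx) : PathAx → Prop := Completion (P ∪ invSet P)

/-- A path from `x` to `y` with the given string of diamonds in the propagation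
    graph determined by the edge set `E`: each `Rxy` contributes the labeled
    edges `(x, y, ◇)` and `(y, x, ◆)`. -/
inductive LPath (E : Finset (Label × Label)) : Label → Label → List Dmd → Prop
  | nil (x : Label) : LPath E x x []
  | fwd {x z y : Label} {ds : List Dmd} :
      (x, z) ∈ E → LPath E z y ds → LPath E x y (Dmd.wd :: ds)
  | bwd {x z y : Label} {ds : List Dmd} :
      (z, x) ∈ E → LPath E z y ds → LPath E x y (Dmd.bd :: ds)

/-- The labeled propagation rules `LabPr(P)` (premise, conclusion):
    from `R, x:⟨?⟩A, y:A, Γ` infer `R, x:⟨?⟩A, Γ`, provided there is a path `π`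
    from `x` to `y` in the propagation graph of the premise whose string `Π`
    satisfies `ΠA → ⟨?⟩A ∈ (P ∪ I(P))*`. -/
def LabPr (P : Set PathAx) : LSeq → LSeq → Prop :=
  fun prem concl =>
    ∃ (R : RelSet) (Γ : Multiset (Label × Formula)) (x y : Label)
      (A : Formula) (d : Dmd) (Pi : List Dmd),
      prem = (R, (x, dmdF d A) ::ₘ (y, A) ::ₘ Γ) ∧
      concl = (R, (x, dmdF d A) ::ₘ Γ) ∧
      LPath R x y Pi ∧ PStar P ⟨Pi, d⟩

/-! ## Labeled graphs, labeled polytrees, and the translations 𝔏 and 𝔑 -/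

/-- A labeled graph `(V, E, L)`: vertices decorated with multisets of formulae. -/
structure LGraph : Type where
  V : Finset Label
  E : Finset (Label × Label)
  L : Label → Multiset Formula

/-- Union of labeled graphs (multiset union of labels at shared vertices). -/
def LGraph.union (G H : LGraph) : LGraph :=
  ⟨G.V ∪ H.V, G.E ∪ H.E, fun z => G.L z + H.L z⟩

/-- Isomorphism of labeled graphs: a bijection between the vertex sets
    preserving edges and vertex labels. -/
def LGraph.Iso (G H : LGraph) : Prop :=
  ∃ f : Label → Label, Set.BijOn f ↑G.V ↑H.V ∧
    (∀ u ∈ G.V, ∀ v ∈ G.V, ((u, v) ∈ G.E ↔ (f u, f v) ∈ H.E)) ∧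
    (∀ v ∈ G.V, G.L v = H.L (f v))

/-- A labeled graph is a labeled polytree when its underlying undirected
    graph is a tree. -/
def LGraph.IsPolytree (G : LGraph) : Prop :=
  (∀ x y : Label, (x, y) ∈ G.E → (y, x) ∉ G.E) ∧
  (∀ e ∈ G.E, e.1 ∈ G.V ∧ e.2 ∈ G.V) ∧
  ((SimpleGraph.fromRel fun a b => (a, b) ∈ G.E).induce (↑G.V : Set Label)).IsTree

/-- The translation `𝔏ₓ` from nested sequents to labeled graphs (relational,
    since fresh vertices may be chosen arbitrarily): `LabT x X G` states that
    `G` is a labeled graph obtained by translating `X` starting at vertex `x`. -/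
inductive LabT : Label → NSeq → LGraph → Prop
  | empty (x : Label) : LabT x .empty ⟨∅, ∅, fun _ => 0⟩
  | fml (x : Label) (A : Formula) :
      LabT x (.fml A) ⟨{x}, ∅, fun z => if z = x then {A} else 0⟩
  | comma {x : Label} {X Y : NSeq} {G H : LGraph} :
      LabT x X G → LabT x Y H → G.V ∩ H.V ⊆ {x} →
      LabT x (X.comma Y) (G.union H)
  | white {x y : Label} {X : NSeq} {G : LGraph} :
      LabT y X G → x ∉ G.V → x ≠ y →
      LabT x X.white ⟨insert x (insert y G.V), insert (x, y) G.E, G.L⟩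
  | black {x y : Label} {X : NSeq} {G : LGraph} :
      LabT y X G → x ∉ G.V → x ≠ y →
      LabT x X.black ⟨insert x (insert y G.V), insert (y, x) G.E, G.L⟩

/-- The translation `𝔑ₓ` from labeled polytrees (rooted at a chosen vertex `x`)
    to nested sequents: the inverse of the translation `𝔏ₓ`. -/
def NTrans (x : Label) (G : LGraph) (X : NSeq) : Prop := LabT x X G

/-- The labeled graph of a labeled sequent `R, Γ`: vertices are the occurring
    labels, edges are given by `R`, and each vertex `x` is labeled by the
    multiset `{A | x:A ∈ Γ}`. -/
def toLGraph (R : RelSet) (Γ : Multiset (Label × Formula)) : LGraph where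
  V := R.image Prod.fst ∪ R.image Prod.snd ∪ (Γ.map Prod.fst).toFinset
  E := R
  L := fun z => (Γ.filter fun p => p.1 = z).map Prod.snd

/-- The multiset of labeled formulae of a labeled graph, read as a sequent. -/
def LGraph.toSeqGamma (G : LGraph) : Multiset (Label × Formula) :=
  G.V.val.bind fun v => (G.L v).map fun A => (v, A)

/-- The set of labels occurring in a labeled sequent. -/
def seqLabels (R : RelSet) (Γ : Multiset (Label × Formula)) : Set Label :=
  {z | (∃ w, (z, w) ∈ R ∨ (w, z) ∈ R) ∨ ∃ A, (z, A) ∈ Γ}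

/-- `R, Γ` is a labeled polytree sequent: its underlying undirected graph
    (on the occurring labels) is a tree. -/
def IsPolytreeSeq (R : RelSet) (Γ : Multiset (Label × Formula)) : Prop :=
  (∀ x y : Label, (x, y) ∈ R → (y, x) ∉ R) ∧
  ((SimpleGraph.fromRel fun a b => (a, b) ∈ R).induce (seqLabels R Γ)).IsTree

/-- The labeled edges `(u, v, ◇)` and `(v, u, ◆)` of the propagation graph
    determined by an edge set. -/
def propEdges (E : Finset (Label × Label)) : Set (Label × Label × Dmd) :=
  {e | ∃ u v : Label, (u, v) ∈ E ∧ (e = (u, v, Dmd.wd) ∨ e = (v, u, Dmd.bd))}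

/-- The deep propagation rules `DeepPr(P)` (premise, conclusion), expressed via
    the labeled polytree representation of nested sequents: from
    `X[⟨?⟩A]ᵢ[A]ⱼ` infer `X[⟨?⟩A]ᵢ[∅]ⱼ`, provided there is a path from node `i`
    (= `u`) to node `j` (= `v`) in the propagation graph of the premise whose
    string `Π` satisfies `ΠA → ⟨?⟩A ∈ (P ∪ I(P))*`. -/
def DeepPrL (P : Set PathAx) : NSeq → NSeq → Prop :=
  fun prem concl =>
    ∃ (r : Label) (G : LGraph) (u v : Label) (A : Formula) (d : Dmd)
      (Pi : List Dmd),
      LabT r prem G ∧ LPath G.E u v Pi ∧ PStar P ⟨Pi, d⟩ ∧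
      dmdF d A ∈ G.L u ∧ A ∈ G.L v ∧
      LabT r concl ⟨G.V, G.E, fun z => if z = v then (G.L v).erase A else G.L z⟩

/-- Substitution of the label `y` by the label `x`. -/
def subLabel (x y z : Label) : Label := if z = y then x else z


/-! ### Auxiliary lemmas for the polytree preservation theorem -/

open SimpleGraph in
private lemma no_cycle_at {W : Type*} (G : SimpleGraph W) (Y : W)
    (hdeg : ∀ z w, G.Adj Y z → G.Adj Y w → z = w) :
    ∀ (c : G.Walk Y Y), ¬ c.IsCycle := by
  intro c hc
  cases c with
  | nil => exact hc.ne_nil rfl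
  | cons h q =>
    rename_i b
    cases hr : q.reverse with
    | nil => exact h.ne rfl
    | cons h2 q2 =>
      rename_i c2
      have hb : b = c2 := hdeg b c2 h h2
      have hmem : s(Y, c2) ∈ q.edges := by
        have h3 : s(Y, c2) ∈ q.reverse.edges := by
          rw [hr]; exact List.mem_cons_self
        rwa [SimpleGraph.Walk.edges_reverse, List.mem_reverse] at h3
      have hnodup := hc.isCircuit.isTrail.edges_nodup
      rw [SimpleGraph.Walk.edges_cons] at hnodup
      exact (List.nodup_cons.mp hnodup).1 (hb ▸ hmem)

private lemma walk_down {s : Set Label} (r : Label → Label → Prop) (x y : Label)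
    (hys : y ∉ s) :
    ∀ {u v : {z // z ∈ insert y s}}
      (p : ((SimpleGraph.fromRel fun a b => (a, b) = (x, y) ∨ r a b).induce
        (insert y s)).Walk u v)
      (_ : ∀ z ∈ p.support, z.1 ≠ y) (hu : u.1 ∈ s) (hv : v.1 ∈ s),
      ∃ q : ((SimpleGraph.fromRel r).induce s).Walk ⟨u.1, hu⟩ ⟨v.1, hv⟩,
        q.edges.map (Sym2.map Subtype.val) = p.edges.map (Sym2.map Subtype.val) ∧
        q.support.map Subtype.val = p.support.map Subtype.val := by
  intro u v p
  induction p with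
  | nil =>
    intro _ hu hv
    exact ⟨SimpleGraph.Walk.nil, by simp, by simp⟩
  | cons h p ih =>
    rename_i u' w' v'
    intro hp hu hv
    have hwy : w'.1 ≠ y := hp w' (List.mem_cons_of_mem _ p.start_mem_support)
    have huy : u'.1 ≠ y := hp u' List.mem_cons_self
    have hw : w'.1 ∈ s := by
      rcases Set.mem_insert_iff.mp w'.2 with h1 | h1
      · exact absurd h1 hwy
      · exact h1
    have ha : ((SimpleGraph.fromRel r).induce s).Adj ⟨u'.1, hu⟩ ⟨w'.1, hw⟩ := by
      simp only [SimpleGraph.comap_adj, Function.Embedding.coe_subtype,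
        SimpleGraph.fromRel_adj, Prod.mk.injEq] at h ⊢
      obtain ⟨hne, hrel⟩ := h
      refine ⟨hne, ?_⟩
      rcases hrel with (⟨_, h2⟩ | h2) | (⟨_, h2⟩ | h2)
      · exact absurd h2 hwy
      · exact Or.inl h2
      · exact absurd h2 huy
      · exact Or.inr h2
    obtain ⟨q, he, hsup⟩ := ih (fun z hz => hp z (List.mem_cons_of_mem _ hz)) hw hv
    exact ⟨SimpleGraph.Walk.cons ha q, by simp [he], by simp [hsup]⟩

private lemma pendant {s : Set Label} (r : Label → Label → Prop) (x y : Label)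
    (hx : x ∈ s) (hys : y ∉ s)
    (hfr1 : ∀ z, ¬ r y z) (hfr2 : ∀ z, ¬ r z y)
    (hT : ((SimpleGraph.fromRel r).induce s).IsTree) :
    ((SimpleGraph.fromRel fun a b => (a, b) = (x, y) ∨ r a b).induce
      (insert y s)).IsTree := by
  set G2 := ((SimpleGraph.fromRel fun a b => (a, b) = (x, y) ∨ r a b).induce
    (insert y s)) with hG2
  have hxy : x ≠ y := fun h => hys (h ▸ hx)
  set Y2 : {z // z ∈ insert y s} := ⟨y, Set.mem_insert y s⟩ with hY2
  set X2 : {z // z ∈ insert y s} := ⟨x, Set.mem_insert_of_mem _ hx⟩ with hX2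
  have adj_iff : ∀ u v : {z // z ∈ insert y s},
      G2.Adj u v ↔ u.1 ≠ v.1 ∧ (((u.1, v.1) = (x, y) ∨ r u.1 v.1) ∨
        ((v.1, u.1) = (x, y) ∨ r v.1 u.1)) := by
    intro u v
    simp only [hG2, SimpleGraph.comap_adj, Function.Embedding.coe_subtype,
      SimpleGraph.fromRel_adj]
  have nbr : ∀ v, G2.Adj Y2 v → v = X2 := by
    intro v hv
    rw [adj_iff] at hv
    obtain ⟨hne, hrel⟩ := hv
    rcases hrel with (h2 | h2) | (h2 | h2)
    · exact absurd (congrArg Prod.fst h2) hxy.symm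
    · exact absurd h2 (hfr1 _)
    · exact Subtype.ext (congrArg Prod.fst h2)
    · exact absurd h2 (hfr2 _)
  have adjYX : G2.Adj Y2 X2 := by
    rw [adj_iff]
    exact ⟨hxy.symm, Or.inr (Or.inl rfl)⟩
  let ι : ((SimpleGraph.fromRel r).induce s) →g G2 :=
    ⟨fun a => ⟨a.1, Set.mem_insert_of_mem _ a.2⟩, by
      intro a b hab
      simp only [SimpleGraph.comap_adj, Function.Embedding.coe_subtype,
        SimpleGraph.fromRel_adj] at hab
      rw [adj_iff]
      exact ⟨hab.1, hab.2.elim (fun h => Or.inl (Or.inr h)) (fun h => Or.inr (Or.inr h))⟩⟩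
  have reach_s : ∀ (a b : {z // z ∈ insert y s}), a.1 ∈ s → b.1 ∈ s →
      G2.Reachable a b := by
    intro a b ha hb
    have h2 := SimpleGraph.Reachable.map ι
      (hT.isConnected.preconnected ⟨a.1, ha⟩ ⟨b.1, hb⟩)
    have e1 : ι ⟨a.1, ha⟩ = a := Subtype.ext rfl
    have e2 : ι ⟨b.1, hb⟩ = b := Subtype.ext rfl
    rwa [e1, e2] at h2
  have reachY : ∀ b : {z // z ∈ insert y s}, b.1 ∈ s → G2.Reachable Y2 b :=
    fun b hb => adjYX.reachable.trans (reach_s X2 b hx hb)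
  constructor
  · haveI : Nonempty {z // z ∈ insert y s} := ⟨Y2⟩
    refine ⟨fun u v => ?_⟩
    rcases Set.mem_insert_iff.mp u.2 with hu | hu <;>
      rcases Set.mem_insert_iff.mp v.2 with hv | hv
    · have : u = Y2 := Subtype.ext hu
      have h2 : v = Y2 := Subtype.ext hv
      rw [this, h2]
    · have : u = Y2 := Subtype.ext hu
      rw [this]; exact reachY v hv
    · have : v = Y2 := Subtype.ext hv
      rw [this]; exact (reachY u hu).symm
    · exact reach_s u v hu hv
  · intro v c hc
    by_cases hmem : Y2 ∈ c.support
    · exact no_cycle_at G2 Y2 (fun z w hz hw => (nbr z hz).trans (nbr w hw).symm)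
        (c.rotate Y2 hmem) (hc.rotate hmem)
    · have hv : v.1 ∈ s := by
        rcases Set.mem_insert_iff.mp v.2 with h1 | h1
        · exfalso
          have hvY : Y2 = v := Subtype.ext h1.symm
          rw [hvY] at hmem
          exact hmem c.start_mem_support
        · exact h1
      obtain ⟨q, he, hsup⟩ := walk_down r x y hys c
        (fun z hz hzy => hmem ((Subtype.ext hzy : z = Y2) ▸ hz)) hv hv
      have finj : Function.Injective (Sym2.map (Subtype.val :
          {z // z ∈ insert y s} → Label)) := Sym2.map.injective Subtype.val_injective
      have finj' : Function.Injective (Sym2.map (Subtype.val :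
          {z // z ∈ s} → Label)) := Sym2.map.injective Subtype.val_injective
      have hq : q.IsCycle := by
        refine ⟨⟨⟨?_⟩, ?_⟩, ?_⟩
        · have h1 : (c.edges.map (Sym2.map Subtype.val)).Nodup :=
            (hc.isCircuit.isTrail.edges_nodup).map finj
          rw [← he] at h1
          exact h1.of_map _
        · intro hq
          rw [hq] at he
          simp only [SimpleGraph.Walk.edges_nil, List.map_eq_nil_iff, List.map_nil] at he
          have h3 := hc.three_le_length
          have : c.edges = [] := List.map_eq_nil_iff.mp he.symm
          rw [← SimpleGraph.Walk.length_edges, this] at h3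
          simp at h3
        · have h1 : (c.support.tail.map (Subtype.val)).Nodup :=
            hc.support_nodup.map Subtype.val_injective
          have h2 : q.support.tail.map (Subtype.val) =
              c.support.tail.map (Subtype.val) := by
            rw [List.map_tail, List.map_tail, hsup]
          rw [← h2] at h1
          exact h1.of_map _
      exact hT.IsAcyclic q hq

private lemma mem_seqLabels {R : RelSet} {Γ : Multiset (Label × Formula)} {z : Label} :
    z ∈ seqLabels R Γ ↔ (∃ w, (z, w) ∈ R ∨ (w, z) ∈ R) ∨ ∃ A, (z, A) ∈ Γ :=
  Iff.rfl

private lemma seqLabels_cons (R : RelSet) (z : Label) (A : Formula)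
    (Γ : Multiset (Label × Formula)) :
    seqLabels R ((z, A) ::ₘ Γ) = insert z (seqLabels R Γ) := by
  ext w
  simp only [seqLabels, Set.mem_setOf_eq, Multiset.mem_cons, Set.mem_insert_iff,
    Prod.mk.injEq]
  constructor
  · rintro (h | ⟨B, ⟨rfl, rfl⟩ | hB⟩)
    · exact Or.inr (Or.inl h)
    · exact Or.inl rfl
    · exact Or.inr (Or.inr ⟨B, hB⟩)
  · rintro (rfl | h | ⟨B, hB⟩)
    · exact Or.inr ⟨A, Or.inl ⟨rfl, rfl⟩⟩
    · exact Or.inl h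
    · exact Or.inr ⟨B, Or.inr hB⟩

private lemma polytree_of_labels_eq {R : RelSet} {Γ Γ' : Multiset (Label × Formula)}
    (h : seqLabels R Γ = seqLabels R Γ') (hp : IsPolytreeSeq R Γ) :
    IsPolytreeSeq R Γ' := ⟨hp.1, h ▸ hp.2⟩

private lemma fromRel_insert_eq (x y : Label) (R : RelSet) (e : Label × Label)
    (he : e = (x, y) ∨ e = (y, x)) :
    (SimpleGraph.fromRel fun a b => (a, b) ∈ insert e R) =
      SimpleGraph.fromRel fun a b => (a, b) = (x, y) ∨ (a, b) ∈ R := by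
  ext a b
  simp only [SimpleGraph.fromRel_adj, Finset.mem_insert, Prod.mk.injEq]
  rcases he with rfl | rfl <;> aesop

private lemma antisym_insert (R : RelSet) (x y : Label) (hxy : x ≠ y)
    (hfr1 : ∀ w, (y, w) ∉ R) (hfr2 : ∀ w, (w, y) ∉ R)
    (hR : ∀ a b : Label, (a, b) ∈ R → (b, a) ∉ R) (e : Label × Label)
    (he : e = (x, y) ∨ e = (y, x)) :
    ∀ a b : Label, (a, b) ∈ insert e R → (b, a) ∉ insert e R := by
  intro a b hab hba
  rcases he with rfl | rfl <;>
    rcases Finset.mem_insert.mp hab with hab | hab <;>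
    rcases Finset.mem_insert.mp hba with hba | hba
  · injection hab with h1 h2; injection hba with h3 h4
    exact hxy (h1.symm.trans h4)
  · injection hab with h1 h2
    exact hfr1 a (h2 ▸ hba)
  · injection hba with h3 h4
    exact hfr1 b (h4 ▸ hab)
  · exact hR a b hab hba
  · injection hab with h1 h2; injection hba with h3 h4
    exact hxy (h4.symm.trans h1)
  · injection hab with h1 h2
    exact hfr2 b (h1 ▸ hba)
  · injection hba with h3 h4
    exact hfr2 a (h3 ▸ hab)
  · exact hR a b hab hba

private lemma seqLabels_box (R : RelSet) (Γ : Multiset (Label × Formula))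
    (x y : Label) (A B : Formula) (e : Label × Label)
    (he : e = (x, y) ∨ e = (y, x)) :
    seqLabels (insert e R) ((y, A) ::ₘ Γ) =
      insert y (seqLabels R ((x, B) ::ₘ Γ)) := by
  ext z
  simp only [seqLabels, Set.mem_setOf_eq, Finset.mem_insert, Multiset.mem_cons,
    Set.mem_insert_iff, Prod.mk.injEq]
  rcases he with rfl | rfl <;> constructor
  · rintro (⟨w, (⟨rfl, rfl⟩ | hw) | (⟨rfl, rfl⟩ | hw)⟩ | ⟨C, ⟨rfl, rfl⟩ | hC⟩) <;> aesop
  · rintro (rfl | ⟨w, hw | hw⟩ | ⟨C, ⟨rfl, rfl⟩ | hC⟩) <;> aesop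
  · rintro (⟨w, (⟨rfl, rfl⟩ | hw) | (⟨rfl, rfl⟩ | hw)⟩ | ⟨C, ⟨rfl, rfl⟩ | hC⟩) <;> aesop
  · rintro (rfl | ⟨w, hw | hw⟩ | ⟨C, ⟨rfl, rfl⟩ | hC⟩) <;> aesop

/-- Lemma `Lab-equiv`: every derivation in `G3Kt` whose end
    sequent is a labeled polytree sequent consists solely of labeled polytree
    sequents. -/
theorem g3kt_derivation_all_polytree (R : RelSet)
    (Γ : Multiset (Label × Formula)) (D : G3KtD NoExt R Γ)
    (h : IsPolytreeSeq R Γ) :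
    D.allSeq (fun S => IsPolytreeSeq S.1 S.2) := by
  revert h
  induction D with
  | id R Γ x p => intro h; exact h
  | orR R Γ x A B D ih =>
    intro h
    refine ⟨h, ih ?_⟩
    refine polytree_of_labels_eq ?_ h
    rw [seqLabels_cons, seqLabels_cons, seqLabels_cons, Set.insert_idem]
  | andR R Γ x A B D1 D2 ih1 ih2 =>
    intro h
    refine ⟨h, ih1 (polytree_of_labels_eq ?_ h), ih2 (polytree_of_labels_eq ?_ h)⟩ <;>
      rw [seqLabels_cons, seqLabels_cons]
  | boxR R Γ x y A hy D ih =>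
    intro h
    refine ⟨h, ih ?_⟩
    have hys : y ∉ seqLabels R ((x, Formula.box A) ::ₘ Γ) := hy
    have hx : x ∈ seqLabels R ((x, Formula.box A) ::ₘ Γ) :=
      Or.inr ⟨_, Multiset.mem_cons_self _ _⟩
    have hfr1 : ∀ w, (y, w) ∉ R := fun w hw => hy (Or.inl ⟨w, Or.inl hw⟩)
    have hfr2 : ∀ w, (w, y) ∉ R := fun w hw => hy (Or.inl ⟨w, Or.inr hw⟩)
    have hxy : x ≠ y := fun hxy => hys (hxy ▸ hx)
    refine ⟨antisym_insert R x y hxy hfr1 hfr2 h.1 _ (Or.inl rfl), ?_⟩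
    rw [fromRel_insert_eq x y R _ (Or.inl rfl),
      seqLabels_box R Γ x y A (Formula.box A) _ (Or.inl rfl)]
    exact pendant _ x y hx hys hfr1 hfr2 h.2
  | diaR R Γ x y A hR D ih =>
    intro h
    refine ⟨h, ih (polytree_of_labels_eq ?_ h)⟩
    rw [seqLabels_cons, seqLabels_cons, seqLabels_cons]
    have hmem : y ∈ insert x (seqLabels R Γ) :=
      Set.mem_insert_of_mem _ (Or.inl ⟨x, Or.inr hR⟩)
    exact (Set.insert_eq_self.mpr hmem).symm
  | bboxR R Γ x y A hy D ih =>
    intro h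
    refine ⟨h, ih ?_⟩
    have hys : y ∉ seqLabels R ((x, Formula.bbox A) ::ₘ Γ) := hy
    have hx : x ∈ seqLabels R ((x, Formula.bbox A) ::ₘ Γ) :=
      Or.inr ⟨_, Multiset.mem_cons_self _ _⟩
    have hfr1 : ∀ w, (y, w) ∉ R := fun w hw => hy (Or.inl ⟨w, Or.inl hw⟩)
    have hfr2 : ∀ w, (w, y) ∉ R := fun w hw => hy (Or.inl ⟨w, Or.inr hw⟩)
    have hxy : x ≠ y := fun hxy => hys (hxy ▸ hx)
    refine ⟨antisym_insert R x y hxy hfr1 hfr2 h.1 _ (Or.inr rfl), ?_⟩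
    rw [fromRel_insert_eq x y R _ (Or.inr rfl),
      seqLabels_box R Γ x y A (Formula.bbox A) _ (Or.inr rfl)]
    exact pendant _ x y hx hys hfr1 hfr2 h.2
  | bdiaR R Γ x y A hR D ih =>
    intro h
    refine ⟨h, ih (polytree_of_labels_eq ?_ h)⟩
    rw [seqLabels_cons, seqLabels_cons, seqLabels_cons]
    have hmem : y ∈ insert x (seqLabels R Γ) :=
      Set.mem_insert_of_mem _ (Or.inl ⟨x, Or.inl hR⟩)
    exact (Set.insert_eq_self.mpr hmem).symm
  | ext R' Γ' R Γ hext D ih => exact hext.elim
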